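/- Let k ≥ 1 be such that k + 1 is not a power of 2, let J ⊆ ℕ be the set of binary digits of k, let r be the smallest integer ≥ 1 with r ∈ J and r − 1 ∉ J (such r exists since k + 1 is not a power of 2), and let x = ∏_{j∈J} X (j+1) ∈ R. Then (π_{2^r − 1} ⊗ id)(ψ_R(x)) = (Q^r(X 0) · ∏_{j∈J, j≠r} (X 0)^(2^j)) ⊗ ((X 1)^(2^r) · ∏_{j∈J, j≠r} X (j+1)), and this element is nonzero. (This shows 2^r − 1 ∈ S(x) for the top class x of H_*(Ratₖ; 𝔽₂).) -/

import Mathlib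

open MvPolynomial TensorProduct

/-- The field 𝔽₂. -/
abbrev F2 : Type := ZMod 2

/-- The polynomial ring `𝔽₂[X 0, X 1, X 2, …]`, used as a model both for
`H_*(∐ₖ Ratₖ; 𝔽₂) = 𝔽₂[g, g⁻¹Qg, Q(g⁻¹Qg), …]` (the "R" model, where `X 0 = g` and
`X (i+1) = Qⁱ(g⁻¹Qg)`) and for `H_*(∐ₙ Bβₙ; 𝔽₂) = 𝔽₂[g, Qg, Q²g, …]`
(the "B" model, where `X i = Qⁱg`). -/
abbrev P : Type := MvPolynomial ℕ F2

/-- Weight of the variable `X i` in the braid model `B`: `wt(Qⁱg) = 2^i`. -/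
def wB : ℕ → ℕ := fun i => 2 ^ i

/-- Dimension of the variable `X i` in the braid model `B`: `dim(Qⁱg) = 2^i - 1`. -/
def dB : ℕ → ℕ := fun i => 2 ^ i - 1

/-- Weight of the variable `X i` in the Rat model `R`: `wt(g) = 1`,
`wt(Qⁱ(g⁻¹Qg)) = 2^i`. -/
def wR : ℕ → ℕ := fun i => match i with
  | 0 => 1
  | j + 1 => 2 ^ j

/-- Dimension of the variable `X i` in the Rat model `R`: `dim(g) = 0`,
`dim(Qⁱ(g⁻¹Qg)) = 2^(i+1) - 1`. -/
def dR : ℕ → ℕ := fun i => match i with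
  | 0 => 0
  | j + 1 => 2 ^ (j + 1) - 1

/-- The weight (resp. dimension) of a monomial with exponent vector `m`: the sum,
with multiplicity, of the weights (resp. dimensions) `w i` of its variables. -/
def mwt (w : ℕ → ℕ) (m : ℕ →₀ ℕ) : ℕ := m.sum fun i e => e * w i

/-- A polynomial is homogeneous of weight (resp. dimension) `n` with respect to the
variable-weight function `w` if every monomial in its support has weight
(resp. dimension) `n`. -/
def Homog (w : ℕ → ℕ) (n : ℕ) (x : P) : Prop := ∀ m ∈ x.support, mwt w m = n

/-- The 𝔽₂-linear span of the monomials of weight `n`. -/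
noncomputable def spanWt (w : ℕ → ℕ) (n : ℕ) : Submodule F2 P :=
  Submodule.span F2 {p : P | ∃ m : ℕ →₀ ℕ, mwt w m = n ∧ p = monomial m 1}

/-- The image `N ⊗ M` inside `P ⊗ P` of two submodules `N, M ⊆ P`. -/
noncomputable def tensorSub (N M : Submodule F2 P) : Submodule F2 (P ⊗[F2] P) :=
  Submodule.span F2 {t : P ⊗[F2] P | ∃ a ∈ N, ∃ b ∈ M, t = a ⊗ₜ[F2] b}

/-- `Q` is the Araki–Kudo operation on the Rat model: the 𝔽₂-linear map with
`Q(X 0) = X 0 · X 1`, `Q(X (i+1)) = X (i+2)`, and the Cartan formula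
`Q(uv) = u²Q(v) + Q(u)v²`. -/
def IsQ (Q : P →ₗ[F2] P) : Prop :=
  Q (X 0) = X 0 * X 1 ∧ (∀ i : ℕ, Q (X (i + 1)) = X (i + 2)) ∧
    ∀ u v : P, Q (u * v) = u ^ 2 * Q v + Q u * v ^ 2

/-- `ψ` is the coproduct on the braid model `B`: the 𝔽₂-algebra map with
`ψ(g) = g ⊗ g` and `ψ(Qⁱg) = g^(2^i) ⊗ Qⁱg + Qⁱg ⊗ g^(2^i)` for `i ≥ 1`. -/
def IsPsiB (ψ : P →ₐ[F2] P ⊗[F2] P) : Prop :=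
  ψ (X 0) = X 0 ⊗ₜ[F2] X 0 ∧
    ∀ i : ℕ, 1 ≤ i →
      ψ (X i) = ((X 0) ^ (2 ^ i)) ⊗ₜ[F2] (X i) + (X i) ⊗ₜ[F2] ((X 0) ^ (2 ^ i))

/-- `ψ` is the coproduct on the Rat model `R` (with Araki–Kudo operation `Q`):
the 𝔽₂-algebra map with `ψ(g) = g ⊗ g`, `ψ(g⁻¹Qg) = g ⊗ g⁻¹Qg + g⁻¹Qg ⊗ g`, and
`ψ(Qⁱ(g⁻¹Qg)) = g^(2^i) ⊗ Qⁱ(g⁻¹Qg) + Qⁱg ⊗ (g⁻¹Qg)^(2^i) + (g⁻¹Qg)^(2^i) ⊗ Qⁱg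
+ Qⁱ(g⁻¹Qg) ⊗ g^(2^i)` for `i ≥ 1`, where `Qⁱg = Qⁱ(X 0)`. -/
def IsPsiR (Q : P →ₗ[F2] P) (ψ : P →ₐ[F2] P ⊗[F2] P) : Prop :=
  ψ (X 0) = X 0 ⊗ₜ[F2] X 0 ∧
  ψ (X 1) = X 0 ⊗ₜ[F2] X 1 + X 1 ⊗ₜ[F2] X 0 ∧
  ∀ i : ℕ, 1 ≤ i →
    ψ (X (i + 1)) =
      ((X 0) ^ (2 ^ i)) ⊗ₜ[F2] (X (i + 1))
      + ((⇑Q)^[i] (X 0)) ⊗ₜ[F2] ((X 1) ^ (2 ^ i))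
      + ((X 1) ^ (2 ^ i)) ⊗ₜ[F2] ((⇑Q)^[i] (X 0))
      + (X (i + 1)) ⊗ₜ[F2] ((X 0) ^ (2 ^ i))

/-- `π` is the family of projections: `π s` is the 𝔽₂-linear endomorphism fixing
every monomial of dimension `s` (with respect to the variable-dimension function
`dimv`) and annihilating every monomial of other dimensions. -/
def IsPi (dimv : ℕ → ℕ) (π : ℕ → P →ₗ[F2] P) : Prop :=
  ∀ (s : ℕ) (m : ℕ →₀ ℕ) (c : F2),
    π s (monomial m c) = if mwt dimv m = s then monomial m c else 0

/-!
Expand `ψ_R(x) = ψ_R(X (r+1)) · ∏_{j ∈ J, j ≠ r} ψ_R(X (j+1))` and keep track only of the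
dimensions of left tensor factors. Besides its leading term `X 0 ^ 2^j ⊗ X (j+1)`, of left
dimension `0`, every term of `ψ_R(X (j+1))` has left dimension in `[max 1 (2^j - 1), 2^(j+1) - 1]`.
Since `r - 1 ∉ J`, the elements `j < r` of `J` are at most `r - 2` and together contribute at
most `2^r - 2`, while an element `j > r` contributes at least `2^(r+1) - 1`. So the only term of
the product with left dimension `2^r - 1` is `Q^r(X 0) ⊗ X 1 ^ 2^r` times the leading terms of
the other factors. It is nonzero because `Q^r(X 0)` is `X 0 ^ 2^(r-1) · X r` plus a polynomial
in `X 0, …, X (r-1)`.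
-/

open Pointwise

theorem TensorProduct.tmul_ne_zero {R V W : Type*} [CommSemiring R] [NoZeroDivisors R]
    [AddCommMonoid V] [Module R V] [Module.Projective R V]
    [AddCommMonoid W] [Module R W] [Module.Projective R W]
    {v : V} {w : W} (hv : v ≠ 0) (hw : w ≠ 0) : v ⊗ₜ[R] w ≠ 0 := by
  obtain ⟨f, hf⟩ := Module.Projective.exists_dual_ne_zero R hv
  obtain ⟨g, hg⟩ := Module.Projective.exists_dual_ne_zero R hw
  intro h
  have := congrArg (TensorProduct.lid R R ∘ TensorProduct.map f g) h
  simp only [Function.comp_apply, TensorProduct.map_tmul, TensorProduct.lid_tmul, smul_eq_mul,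
    map_zero] at this
  exact mul_ne_zero hf hg this

theorem sum_two_pow_succ_le {K : Finset ℕ} {r : ℕ} (hr : 1 ≤ r) (hK : ∀ j ∈ K, j < r - 1) :
    ∑ j ∈ K, 2 ^ (j + 1) ≤ 2 ^ r - 2 := by
  have hlt := Nat.geomSum_lt le_rfl hK
  have hr' : 2 ^ r = 2 * 2 ^ (r - 1) := by rw [← pow_succ']; congr 1; omega
  simp only [pow_succ, ← Finset.sum_mul]
  omega

theorem mwt_eq_weight (w : ℕ → ℕ) (m : ℕ →₀ ℕ) : mwt w m = Finsupp.weight w m := by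
  simp [mwt, Finsupp.weight_apply]

theorem IsPi.eq_weightedHomogeneousComponent {w : ℕ → ℕ} {π : ℕ → P →ₗ[F2] P} (hπ : IsPi w π)
    (s : ℕ) : π s = weightedHomogeneousComponent w s := by
  classical
  refine MvPolynomial.linearMap_ext fun m => LinearMap.ext fun c => ?_
  simp only [LinearMap.coe_comp, Function.comp_apply, hπ s m c, mwt_eq_weight,
    weightedHomogeneousComponent_of_mem (isWeightedHomogeneous_monomial w m c rfl), eq_comm]

def IsCartan (Q : P →ₗ[F2] P) : Prop := ∀ u v : P, Q (u * v) = u ^ 2 * Q v + Q u * v ^ 2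

section Cartan

variable {Q : P →ₗ[F2] P}

theorem map_one_eq_zero_of_cartan (hQ : IsCartan Q) : Q 1 = 0 := by
  simpa [CharTwo.add_self_eq_zero] using hQ 1 1

theorem isWeightedHomogeneous_cartan_mul (hQ : IsCartan Q) {w : ℕ → ℕ} {a b : P} {d e : ℕ}
    (ha : IsWeightedHomogeneous w a d) (hQa : IsWeightedHomogeneous w (Q a) (2 * d + 1))
    (hb : IsWeightedHomogeneous w b e) (hQb : IsWeightedHomogeneous w (Q b) (2 * e + 1)) :
    IsWeightedHomogeneous w (Q (a * b)) (2 * (d + e) + 1) := by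
  rw [hQ]
  refine IsWeightedHomogeneous.add ?_ ?_
  · convert (ha.pow 2).mul hQb using 1
    simp only [smul_eq_mul]; ring
  · convert hQa.mul (hb.pow 2) using 1
    simp only [smul_eq_mul]; ring

theorem isWeightedHomogeneous_cartan_monomial (hQ : IsCartan Q) {w : ℕ → ℕ}
    (hX : ∀ i, IsWeightedHomogeneous w (Q (X i)) (2 * w i + 1)) (s : ℕ →₀ ℕ) :
    IsWeightedHomogeneous w (Q (monomial s 1)) (2 * Finsupp.weight w s + 1) := by
  induction s using Finsupp.induction_linear with
  | zero => simpa [map_one_eq_zero_of_cartan hQ] using isWeightedHomogeneous_zero F2 w 1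
  | add s t hs ht =>
    rw [← mul_one (1 : F2), ← monomial_mul, map_add]
    exact isWeightedHomogeneous_cartan_mul hQ (isWeightedHomogeneous_monomial w s 1 rfl) hs
      (isWeightedHomogeneous_monomial w t 1 rfl) ht
  | single i e =>
    induction e with
    | zero => simpa [map_one_eq_zero_of_cartan hQ] using isWeightedHomogeneous_zero F2 w 1
    | succ e ih =>
      rw [Finsupp.single_add, ← mul_one (1 : F2), ← monomial_mul, ← X, map_add]
      convert isWeightedHomogeneous_cartan_mul hQ
        (isWeightedHomogeneous_monomial w (Finsupp.single i e) 1 rfl) ih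
        (isWeightedHomogeneous_X F2 w i) (hX i) using 4
      rw [Finsupp.weight_single, one_smul]

theorem IsWeightedHomogeneous.cartan (hQ : IsCartan Q) {w : ℕ → ℕ}
    (hX : ∀ i, IsWeightedHomogeneous w (Q (X i)) (2 * w i + 1)) {p : P} {d : ℕ}
    (hp : IsWeightedHomogeneous w p d) : IsWeightedHomogeneous w (Q p) (2 * d + 1) := by
  induction hp using IsWeightedHomogeneous.induction_on with
  | zero => simpa using isWeightedHomogeneous_zero F2 w _
  | add p q _ _ hp hq => simpa using hp.add hq
  | monomial s c hs =>
    rw [← mul_one c, ← smul_eq_mul, ← smul_monomial, map_smul, ← hs]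
    exact (weightedHomogeneousSubmodule F2 w _).smul_mem c
      (isWeightedHomogeneous_cartan_monomial hQ hX s)

theorem cartan_mem_supported (hQ : IsCartan Q)
    {s t : Set ℕ} (hX : ∀ i ∈ s, Q (X i) ∈ supported F2 t)
    (hst : s ⊆ t) {p : P} (hp : p ∈ supported F2 s) : Q p ∈ supported F2 t := by
  have hsub : supported F2 s ≤ supported F2 t := supported_mono hst
  induction hp using Algebra.adjoin_induction with
  | mem x hx =>
    obtain ⟨i, hi, rfl⟩ := hx
    exact hX i hi
  | algebraMap c =>
    rw [Algebra.algebraMap_eq_smul_one, map_smul, map_one_eq_zero_of_cartan hQ, smul_zero]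
    exact Subalgebra.zero_mem _
  | add u v _ _ hu hv => simpa using Subalgebra.add_mem _ hu hv
  | mul u v hu' hv' hu hv =>
    rw [hQ]
    exact Subalgebra.add_mem _ (Subalgebra.mul_mem _ (Subalgebra.pow_mem _ (hsub hu') 2) hv)
      (Subalgebra.mul_mem _ hu (Subalgebra.pow_mem _ (hsub hv') 2))

end Cartan

namespace IsQ

variable {Q : P →ₗ[F2] P}

theorem isCartan (hQ : IsQ Q) : IsCartan Q := hQ.2.2

theorem isWeightedHomogeneous_dR_X (hQ : IsQ Q) (i : ℕ) :
    IsWeightedHomogeneous dR (Q (X i)) (2 * dR i + 1) := by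
  cases i with
  | zero =>
    simpa [hQ.1, dR] using
      (isWeightedHomogeneous_X F2 dR 0).mul (isWeightedHomogeneous_X F2 dR 1)
  | succ i =>
    rw [hQ.2.1 i]
    convert isWeightedHomogeneous_X F2 dR (i + 2) using 1
    simp only [dR]
    have := Nat.one_le_two_pow (n := i + 1)
    rw [pow_succ 2 (i + 1)]
    omega

theorem isWeightedHomogeneous_iterate_X_zero (hQ : IsQ Q) (j : ℕ) :
    IsWeightedHomogeneous dR ((⇑Q)^[j] (X 0)) (2 ^ j - 1) := by
  induction j with
  | zero => exact isWeightedHomogeneous_X F2 dR 0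
  | succ j ih =>
    rw [Function.iterate_succ_apply']
    convert IsWeightedHomogeneous.cartan hQ.isCartan hQ.isWeightedHomogeneous_dR_X ih using 1
    have := Nat.one_le_two_pow (n := j)
    rw [pow_succ]
    omega

theorem map_mem_supported_Iic (hQ : IsQ Q) {n : ℕ} {p : P} (hp : p ∈ supported F2 (Set.Iic n)) :
    Q p ∈ supported F2 (Set.Iic (n + 1)) := by
  refine cartan_mem_supported hQ.isCartan (fun i hi => ?_) (Set.Iic_subset_Iic.mpr n.le_succ) hp
  cases i with
  | zero =>
    rw [hQ.1]
    exact Subalgebra.mul_mem _ (X_mem_supported.mpr (by simp)) (X_mem_supported.mpr (by simp))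
  | succ i =>
    rw [hQ.2.1 i]
    exact X_mem_supported.mpr (by simpa using hi)

theorem iterate_X_zero_sub_mem_supported (hQ : IsQ Q) (j : ℕ) :
    (⇑Q)^[j + 1] (X 0) - X 0 ^ 2 ^ j * X (j + 1) ∈ supported F2 (Set.Iic j) := by
  induction j with
  | zero => simp [hQ.1]
  | succ j ih =>
    have hX0 : Q (X 0 ^ 2 ^ j) ∈ supported F2 (Set.Iic (j + 1)) :=
      supported_mono (Set.Iic_subset_Iic.mpr (by omega)) <|
        hQ.map_mem_supported_Iic (n := 0) (Subalgebra.pow_mem _ (X_mem_supported.mpr (by simp)) _)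
    have hrec : (⇑Q)^[j + 2] (X 0) - X 0 ^ 2 ^ (j + 1) * X (j + 2) =
        Q ((⇑Q)^[j + 1] (X 0) - X 0 ^ 2 ^ j * X (j + 1)) + Q (X 0 ^ 2 ^ j) * X (j + 1) ^ 2 := by
      rw [Function.iterate_succ_apply' _ (j + 1), map_sub, hQ.2.2, hQ.2.1, ← pow_mul, ← pow_succ]
      ring
    rw [hrec]
    exact Subalgebra.add_mem _ (hQ.map_mem_supported_Iic ih)
      (Subalgebra.mul_mem _ hX0 (Subalgebra.pow_mem _ (X_mem_supported.mpr (by simp)) _))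

theorem iterate_X_zero_ne_zero (hQ : IsQ Q) {j : ℕ} (hj : 1 ≤ j) : (⇑Q)^[j] (X 0) ≠ 0 := by
  obtain ⟨j, rfl⟩ : ∃ i, j = i + 1 := ⟨j - 1, by omega⟩
  intro h
  have hmem := neg_mem (hQ.iterate_X_zero_sub_mem_supported j)
  rw [h, zero_sub, neg_neg, X_pow_eq_monomial, X, monomial_mul, one_mul, mem_supported,
    vars_monomial one_ne_zero] at hmem
  have := hmem (show j + 1 ∈ _ by simp)
  simp at this

end IsQ

noncomputable def leftHomogSpan (w : ℕ → ℕ) (S : Set ℕ) : Submodule F2 (P ⊗[F2] P) :=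
  Submodule.span F2 {t | ∃ d ∈ S, ∃ a b : P, IsWeightedHomogeneous w a d ∧ t = a ⊗ₜ[F2] b}

section leftHomogSpan

variable {w : ℕ → ℕ} {S T : Set ℕ}

theorem tmul_mem_leftHomogSpan {d : ℕ} (hd : d ∈ S) {a : P} (ha : IsWeightedHomogeneous w a d)
    (b : P) : a ⊗ₜ[F2] b ∈ leftHomogSpan w S :=
  Submodule.subset_span ⟨d, hd, a, b, ha, rfl⟩

theorem leftHomogSpan_mono (h : S ⊆ T) : leftHomogSpan w S ≤ leftHomogSpan w T :=
  Submodule.span_mono fun _ ⟨d, hd, a, b, ha, ht⟩ => ⟨d, h hd, a, b, ha, ht⟩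

theorem mul_mem_leftHomogSpan {t t' : P ⊗[F2] P} (ht : t ∈ leftHomogSpan w S)
    (ht' : t' ∈ leftHomogSpan w T) : t * t' ∈ leftHomogSpan w (S + T) := by
  have h := Submodule.mul_mem_mul ht ht'
  rw [leftHomogSpan, leftHomogSpan, Submodule.span_mul_span] at h
  refine Submodule.span_le.mpr ?_ h
  rintro _ ⟨_, ⟨d, hd, a, b, ha, rfl⟩, _, ⟨d', hd', a', b', ha', rfl⟩, rfl⟩
  change a ⊗ₜ[F2] b * a' ⊗ₜ[F2] b' ∈ _
  rw [Algebra.TensorProduct.tmul_mul_tmul]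
  exact tmul_mem_leftHomogSpan (Set.add_mem_add hd hd') (ha.mul ha') _

theorem map_weightedHomogeneousComponent_eq_of_sub_mem {s : ℕ} {t t₀ : P ⊗[F2] P}
    (h₀ : t₀ ∈ leftHomogSpan w {s}) (h : t - t₀ ∈ leftHomogSpan w {d | d ≠ s}) :
    TensorProduct.map (weightedHomogeneousComponent w s) LinearMap.id t = t₀ := by
  set f := TensorProduct.map (weightedHomogeneousComponent w s) (LinearMap.id : P →ₗ[F2] P)
  have hfix : leftHomogSpan w {s} ≤ LinearMap.eqLocus f LinearMap.id :=
    Submodule.span_le.mpr fun _ ⟨d, hd, a, b, ha, ht⟩ => by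
      rw [Set.mem_singleton_iff.mp hd] at ha
      simp [ht, f, weightedHomogeneousComponent_eq_self ha]
  have hkill : leftHomogSpan w {d | d ≠ s} ≤ LinearMap.ker f :=
    Submodule.span_le.mpr fun _ ⟨d, hd, a, b, ha, ht⟩ => by
      simp [ht, f, ha.weightedHomogeneousComponent_ne s (Ne.symm hd)]
  rw [← sub_add_cancel t t₀, map_add, LinearMap.mem_ker.mp (hkill h), zero_add]
  exact hfix h₀

theorem prod_sub_prod_tmul_mem_leftHomogSpan {ι : Type*} (K : Finset ι) (f : ι → P ⊗[F2] P)
    (a b : ι → P) (n : ι → ℕ) (N : ℕ) (ha : ∀ j ∈ K, IsWeightedHomogeneous w (a j) 0)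
    (hf : ∀ j ∈ K, f j - a j ⊗ₜ[F2] b j ∈ leftHomogSpan w {d | 1 ≤ d ∧ (d ≤ n j ∨ N ≤ d)}) :
    ∏ j ∈ K, f j - (∏ j ∈ K, a j) ⊗ₜ[F2] (∏ j ∈ K, b j) ∈
      leftHomogSpan w {d | 1 ≤ d ∧ (d ≤ ∑ j ∈ K, n j ∨ N ≤ d)} := by
  classical
  induction K using Finset.induction_on with
  | empty => simp [Algebra.TensorProduct.one_def]
  | @insert j K hj ih =>
    have ha' : ∀ i ∈ K, IsWeightedHomogeneous w (a i) 0 := fun i hi => ha i (by simp [hi])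
    have hM := tmul_mem_leftHomogSpan (w := w) (Set.mem_singleton 0)
      (by simpa using IsWeightedHomogeneous.prod K a (fun _ => 0) ha') (∏ i ∈ K, b i)
    have hm := tmul_mem_leftHomogSpan (w := w) (Set.mem_singleton 0) (ha j (by simp)) (b j)
    have hfj := hf j (by simp)
    have hF := ih ha' fun i hi => hf i (by simp [hi])
    set M := (∏ i ∈ K, a i) ⊗ₜ[F2] (∏ i ∈ K, b i)
    set m := a j ⊗ₜ[F2] b j
    set F := ∏ i ∈ K, f i
    have hsplit : f j * F - m * M = (f j - m) * M + (f j - m) * (F - M) + m * (F - M) := by ring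
    simp only [Finset.prod_insert hj, Finset.sum_insert hj, ← Algebra.TensorProduct.tmul_mul_tmul]
    rw [hsplit]
    refine add_mem (add_mem (leftHomogSpan_mono ?_ (mul_mem_leftHomogSpan hfj hM))
      (leftHomogSpan_mono ?_ (mul_mem_leftHomogSpan hfj hF)))
      (leftHomogSpan_mono ?_ (mul_mem_leftHomogSpan hm hF)) <;>
    · simp only [Set.add_subset_iff, Set.mem_ofPred_eq, Set.mem_singleton_iff]
      omega

end leftHomogSpan

theorem isWeightedHomogeneous_dR_X_zero_pow (n : ℕ) :
    IsWeightedHomogeneous dR (X 0 ^ n : P) 0 := by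
  simpa [dR] using (isWeightedHomogeneous_X F2 dR 0).pow n

theorem isWeightedHomogeneous_dR_prod_X_zero_pow {ι : Type*} (K : Finset ι) (e : ι → ℕ) :
    IsWeightedHomogeneous dR (∏ j ∈ K, X 0 ^ e j : P) 0 := by
  rw [Finset.prod_pow_eq_pow_sum]
  exact isWeightedHomogeneous_dR_X_zero_pow _

theorem isWeightedHomogeneous_dR_X_one_pow (n : ℕ) :
    IsWeightedHomogeneous dR (X 1 ^ n : P) n := by
  simpa [dR] using (isWeightedHomogeneous_X F2 dR 1).pow n

namespace IsPsiR

variable {Q : P →ₗ[F2] P} {ψ : P →ₐ[F2] P ⊗[F2] P}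

theorem apply_X_succ_sub_mem (hQ : IsQ Q) (hψ : IsPsiR Q ψ) (j : ℕ) :
    ψ (X (j + 1)) - (X 0 ^ 2 ^ j) ⊗ₜ[F2] X (j + 1) ∈
      leftHomogSpan dR {d | 1 ≤ d ∧ 2 ^ j - 1 ≤ d ∧ d ≤ 2 ^ (j + 1) - 1} := by
  cases j with
  | zero =>
    rw [hψ.2.1]
    simpa using tmul_mem_leftHomogSpan (by simp [dR]) (isWeightedHomogeneous_X F2 dR 1) (X 0)
  | succ j =>
    have hj : 2 ^ (j + 1 + 1) = 2 * 2 ^ (j + 1) := pow_succ' 2 (j + 1)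
    have hj' : 2 ≤ 2 ^ (j + 1) := Nat.le_self_pow (by omega) 2
    rw [hψ.2.2 (j + 1) (by omega), add_sub_right_comm, add_sub_right_comm, add_sub_right_comm,
      sub_self, zero_add]
    refine add_mem (add_mem ?_ ?_) ?_
    · exact tmul_mem_leftHomogSpan (by simp only [Set.mem_ofPred_eq]; omega)
        (hQ.isWeightedHomogeneous_iterate_X_zero _) _
    · exact tmul_mem_leftHomogSpan (by simp only [Set.mem_ofPred_eq]; omega)
        (isWeightedHomogeneous_dR_X_one_pow _) _
    · exact tmul_mem_leftHomogSpan (by simp only [Set.mem_ofPred_eq, dR]; omega)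
        (isWeightedHomogeneous_X F2 dR (j + 1 + 1)) _

theorem apply_X_succ_sub_iterate_tmul_mem (hψ : IsPsiR Q ψ) {r : ℕ} (hr : 1 ≤ r) :
    ψ (X (r + 1)) - (⇑Q)^[r] (X 0) ⊗ₜ[F2] (X 1 ^ 2 ^ r) ∈
      leftHomogSpan dR {0, 2 ^ r, 2 ^ (r + 1) - 1} := by
  rw [hψ.2.2 r hr, add_sub_right_comm, add_sub_right_comm, add_sub_cancel_right]
  refine add_mem (add_mem ?_ ?_) ?_
  · exact tmul_mem_leftHomogSpan (by simp) (isWeightedHomogeneous_dR_X_zero_pow _) _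
  · exact tmul_mem_leftHomogSpan (by simp) (isWeightedHomogeneous_dR_X_one_pow _) _
  · exact tmul_mem_leftHomogSpan (by simp [dR]) (isWeightedHomogeneous_X F2 dR (r + 1)) _

theorem prod_apply_X_succ_sub_mem (hQ : IsQ Q) (hψ : IsPsiR Q ψ) {r : ℕ} (hr : 1 ≤ r)
    {K : Finset ℕ} (hrK : r ∉ K) (hrK' : r - 1 ∉ K) :
    ∏ j ∈ K, ψ (X (j + 1)) - (∏ j ∈ K, X 0 ^ 2 ^ j) ⊗ₜ[F2] (∏ j ∈ K, X (j + 1)) ∈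
      leftHomogSpan dR {d | 1 ≤ d ∧ (d ≤ 2 ^ r - 2 ∨ 2 ^ (r + 1) - 1 ≤ d)} := by
  have hsum : ∑ j ∈ K, (if j < r then 2 ^ (j + 1) else 0) ≤ 2 ^ r - 2 := by
    rw [← Finset.sum_filter]
    refine sum_two_pow_succ_le hr fun j hj => ?_
    rw [Finset.mem_filter] at hj
    have : j ≠ r - 1 := fun h => hrK' (h ▸ hj.1)
    omega
  refine leftHomogSpan_mono ?_ <| prod_sub_prod_tmul_mem_leftHomogSpan K _ _ _
    (fun j => if j < r then 2 ^ (j + 1) else 0) (2 ^ (r + 1) - 1)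
    (fun j _ => isWeightedHomogeneous_dR_X_zero_pow _) fun j hj => leftHomogSpan_mono ?_
    (apply_X_succ_sub_mem hQ hψ j)
  · intro d hd
    simp only [Set.mem_ofPred_eq] at hd ⊢
    omega
  · have hjr : j ≠ r := fun h => hrK (h ▸ hj)
    intro d hd
    simp only [Set.mem_ofPred_eq] at hd ⊢
    split_ifs with hlt
    · omega
    · have : 2 ^ (r + 1) ≤ 2 ^ j := Nat.pow_le_pow_right (by omega) (by omega)
      omega

theorem apply_prod_X_succ_sub_mem (hQ : IsQ Q) (hψ : IsPsiR Q ψ) {r : ℕ} (hr : 1 ≤ r)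
    {J : Finset ℕ} (hrJ : r ∈ J) (hrpred : r - 1 ∉ J) :
    ψ (∏ j ∈ J, X (j + 1)) - ((⇑Q)^[r] (X 0) * ∏ j ∈ J.erase r, X 0 ^ 2 ^ j) ⊗ₜ[F2]
      (X 1 ^ 2 ^ r * ∏ j ∈ J.erase r, X (j + 1)) ∈ leftHomogSpan dR {d | d ≠ 2 ^ r - 1} := by
  set K := J.erase r
  set m := (⇑Q)^[r] (X 0) ⊗ₜ[F2] (X 1 ^ 2 ^ r : P)
  set M := (∏ j ∈ K, X 0 ^ 2 ^ j : P) ⊗ₜ[F2] (∏ j ∈ K, X (j + 1) : P)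
  set F := ∏ j ∈ K, ψ (X (j + 1))
  have hm₀ : m ∈ leftHomogSpan dR {2 ^ r - 1} :=
    tmul_mem_leftHomogSpan (Set.mem_singleton _) (hQ.isWeightedHomogeneous_iterate_X_zero r) _
  have hM : M ∈ leftHomogSpan dR {0} :=
    tmul_mem_leftHomogSpan (Set.mem_singleton _) (isWeightedHomogeneous_dR_prod_X_zero_pow K _) _
  have hm : ψ (X (r + 1)) - m ∈ leftHomogSpan dR {0, 2 ^ r, 2 ^ (r + 1) - 1} :=
    apply_X_succ_sub_iterate_tmul_mem hψ hr
  have hF : F - M ∈ leftHomogSpan dR {d | 1 ≤ d ∧ (d ≤ 2 ^ r - 2 ∨ 2 ^ (r + 1) - 1 ≤ d)} :=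
    prod_apply_X_succ_sub_mem hQ hψ hr (Finset.notMem_erase r J)
      fun h => hrpred (Finset.mem_of_mem_erase h)
  have hsplit : ψ (∏ j ∈ J, X (j + 1)) - m * M =
      m * (F - M) + (ψ (X (r + 1)) - m) * M + (ψ (X (r + 1)) - m) * (F - M) := by
    rw [map_prod, ← Finset.mul_prod_erase J _ hrJ]
    ring
  have h2r : 2 ≤ 2 ^ r := Nat.le_self_pow (by omega) 2
  have h2r' : 2 ^ (r + 1) = 2 * 2 ^ r := pow_succ' 2 r
  rw [← Algebra.TensorProduct.tmul_mul_tmul, hsplit]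
  refine add_mem (add_mem (leftHomogSpan_mono ?_ (mul_mem_leftHomogSpan hm₀ hF))
    (leftHomogSpan_mono ?_ (mul_mem_leftHomogSpan hm hM)))
    (leftHomogSpan_mono ?_ (mul_mem_leftHomogSpan hm hF)) <;>
  · simp only [Set.add_subset_iff, Set.mem_ofPred_eq, Set.mem_singleton_iff, Set.mem_insert_iff]
    omega

end IsPsiR

theorem psiR_component_nonzero_general
    (J : Finset ℕ)
    (r : ℕ) (hr : 1 ≤ r) (hrJ : r ∈ J) (hrpred : r - 1 ∉ J)
    (Q : P →ₗ[F2] P) (hQ : IsQ Q)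
    (ψ : P →ₐ[F2] P ⊗[F2] P) (hψ : IsPsiR Q ψ)
    (π : ℕ → P →ₗ[F2] P) (hπ : IsPi dR π)
    (x : P) (hx : x = ∏ j ∈ J, X (j + 1)) :
    TensorProduct.map (π (2 ^ r - 1)) (LinearMap.id : P →ₗ[F2] P) (ψ x) =
      ((⇑Q)^[r] (X 0) * ∏ j ∈ J.erase r, (X 0) ^ (2 ^ j)) ⊗ₜ[F2]
        ((X 1) ^ (2 ^ r) * ∏ j ∈ J.erase r, X (j + 1)) ∧
    (((⇑Q)^[r] (X 0) * ∏ j ∈ J.erase r, (X 0) ^ (2 ^ j)) ⊗ₜ[F2]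
        ((X 1) ^ (2 ^ r) * ∏ j ∈ J.erase r, X (j + 1)) : P ⊗[F2] P) ≠ 0 := by
  subst hx
  have hA := isWeightedHomogeneous_dR_prod_X_zero_pow (J.erase r) (2 ^ ·)
  refine ⟨?_, TensorProduct.tmul_ne_zero ?_ ?_⟩
  · rw [hπ.eq_weightedHomogeneousComponent]
    refine map_weightedHomogeneousComponent_eq_of_sub_mem (tmul_mem_leftHomogSpan
      (Set.mem_singleton _) ?_ _) (IsPsiR.apply_prod_X_succ_sub_mem hQ hψ hr hrJ hrpred)
    simpa using (hQ.isWeightedHomogeneous_iterate_X_zero r).mul hA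
  · exact mul_ne_zero (hQ.iterate_X_zero_ne_zero hr)
      (Finset.prod_ne_zero_iff.mpr fun _ _ => pow_ne_zero _ (X_ne_zero _))
  · exact mul_ne_zero (pow_ne_zero _ (X_ne_zero _))
      (Finset.prod_ne_zero_iff.mpr fun _ _ => X_ne_zero _)

/-- Let `k ≥ 1` with `k + 1` not a power of `2`, let `J` be the set
of binary digits of `k`, let `r` be the smallest integer `≥ 1` with `r ∈ J` and
`r − 1 ∉ J`, and let `x = ∏_{j∈J} X (j+1) ∈ R`.  Then
`(π_{2^r−1} ⊗ id)(ψ_R(x)) = (Q^r(X 0)·∏_{j∈J,j≠r} (X 0)^(2^j)) ⊗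
((X 1)^(2^r)·∏_{j∈J,j≠r} X (j+1))`, and this element is nonzero
(so `2^r − 1 ∈ S(x)` for the top class `x` of `H_*(Ratₖ; 𝔽₂)`). -/
theorem psiR_component_nonzero (k : ℕ) (hk : 1 ≤ k)
    (hpow : ∀ m : ℕ, k + 1 ≠ 2 ^ m)
    (J : Finset ℕ) (hJ : k = ∑ j ∈ J, 2 ^ j)
    (r : ℕ) (hr : 1 ≤ r) (hrJ : r ∈ J) (hrpred : r - 1 ∉ J)
    (hmin : ∀ r' : ℕ, 1 ≤ r' → r' ∈ J → r' - 1 ∉ J → r ≤ r')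
    (Q : P →ₗ[F2] P) (hQ : IsQ Q)
    (ψ : P →ₐ[F2] P ⊗[F2] P) (hψ : IsPsiR Q ψ)
    (π : ℕ → P →ₗ[F2] P) (hπ : IsPi dR π)
    (x : P) (hx : x = ∏ j ∈ J, X (j + 1)) :
    TensorProduct.map (π (2 ^ r - 1)) (LinearMap.id : P →ₗ[F2] P) (ψ x) =
      ((⇑Q)^[r] (X 0) * ∏ j ∈ J.erase r, (X 0) ^ (2 ^ j)) ⊗ₜ[F2]
        ((X 1) ^ (2 ^ r) * ∏ j ∈ J.erase r, X (j + 1)) ∧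
    (((⇑Q)^[r] (X 0) * ∏ j ∈ J.erase r, (X 0) ^ (2 ^ j)) ⊗ₜ[F2]
        ((X 1) ^ (2 ^ r) * ∏ j ∈ J.erase r, X (j + 1)) : P ⊗[F2] P) ≠ 0 :=
  psiR_component_nonzero_general J r hr hrJ hrpred Q hQ ψ hψ π hπ x hx
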